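/- Let a, b, c be real numbers with c ≠ 0. For all 3×3 matrices P, Q whose entries are real polynomials, the functions x ↦ (P·D₂)(x)·W(x)·Q(x)ᵀ and x ↦ P(x)·W(x)·((Q·D₂)(x))ᵀ are (entrywise) integrable on ℝ and have equal integrals; that is, D₂ is W-symmetric: ⟨P·D₂, Q⟩_W = ⟨P, Q·D₂⟩_W. -/

import Mathlib

open Matrix Polynomial MeasureTheory

/-- The 3×3 Hermite-type weight matrix. -/
noncomputable def W (a b c : ℝ) (x : ℝ) : Matrix (Fin 3) (Fin 3) ℝ :=
  Real.exp (-x ^ 2) •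
    !![Real.exp (2 * b * x) + a ^ 2 * x ^ 2, a * x, a * c * x ^ 2;
       a * x, 1, c * x;
       a * c * x ^ 2, c * x, c ^ 2 * x ^ 2 + 1]

/-- Second-order (polynomial) coefficient of the operator D₂. -/
noncomputable def G2p (a c : ℝ) : Matrix (Fin 3) (Fin 3) (Polynomial ℝ) :=
  !![0, C a * X, 0; 0, 1, 0; 0, C c * X, 0]

/-- First-order (polynomial) coefficient of the operator D₂. -/
noncomputable def G1p (a c : ℝ) : Matrix (Fin 3) (Fin 3) (Polynomial ℝ) :=
  !![0, C (2 * a), C (-2 * a / c) * X;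
     0, 0, C (-2 / c);
     0, C (2 * c + 2 / c), -2 * X]

/-- Zeroth-order coefficient of the operator D₂. -/
noncomputable def G0p (a c : ℝ) : Matrix (Fin 3) (Fin 3) (Polynomial ℝ) :=
  !![C (2 + 4 / c ^ 2), 0, C (-2 * a / c);
     0, C (2 + 4 / c ^ 2), 0;
     0, 0, 0]

/-- The right action of the operator D₂ on a matrix polynomial:
P·D₂ = P''·G₂ + P'·G₁ + P·G₀. -/
noncomputable def rightD2 (a c : ℝ) (P : Matrix (Fin 3) (Fin 3) (Polynomial ℝ)) :
    Matrix (Fin 3) (Fin 3) (Polynomial ℝ) :=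
  P.map (fun p => derivative (derivative p)) * G2p a c
    + P.map (fun p => derivative p) * G1p a c + P * G0p a c

/-- Entrywise evaluation of a matrix polynomial. -/
noncomputable def evalM (P : Matrix (Fin 3) (Fin 3) (Polynomial ℝ)) (x : ℝ) :
    Matrix (Fin 3) (Fin 3) ℝ :=
  P.map (Polynomial.eval x)

/-!
Write `W = e^{-x²} ω₁ + e^{2bx-x²} E₁₁` with `ω₁` a polynomial matrix. For a summand `φ ω`
with `φ' = g φ`, let `δ M = M' + g M` (`twistedDeriv g M`), so that `(φ M)' = φ δM`. Both
summands satisfy the symmetry equations `F₂ ω = ω F₂ᵀ`, `2 δ(F₂ ω) - F₁ ω = ω F₁ᵀ`,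
`δ²(F₂ ω) - δ(F₁ ω) + F₀ ω = ω F₀ᵀ` (for `E₁₁` because `F₂` and `F₁` annihilate it on both
sides). With them, the Lagrange identity writes `(P·D) ω Qᵀ - P ω (Q·D)ᵀ` as `δ U` for a
polynomial concomitant `U`, so the difference of the two integrands is `(φ U)'`, whose integral
vanishes since `φ U` and `(φ U)'` are integrable.
-/

section MatrixDerivative

variable {R : Type*} [CommRing R] {l m n : Type*}

noncomputable def matDeriv (M : Matrix m n R[X]) : Matrix m n R[X] := M.map derivative

noncomputable def twistedDeriv (g : R[X]) (M : Matrix m n R[X]) : Matrix m n R[X] :=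
  matDeriv M + g • M

@[simp]
lemma twistedDeriv_apply (g : R[X]) (M : Matrix m n R[X]) (i : m) (j : n) :
    twistedDeriv g M i j = derivative (M i j) + g * M i j := rfl

lemma matDeriv_transpose (M : Matrix m n R[X]) : matDeriv Mᵀ = (matDeriv M)ᵀ :=
  transpose_map.symm

lemma matDeriv_mul [Fintype n] (M : Matrix l n R[X]) (N : Matrix n m R[X]) :
    matDeriv (M * N) = matDeriv M * N + M * matDeriv N := by
  ext i j
  simp [matDeriv, mul_apply, derivative_mul, Finset.sum_add_distrib]

variable (g : R[X])

lemma twistedDeriv_zero : twistedDeriv g (0 : Matrix m n R[X]) = 0 := by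
  ext i j : 1
  simp

lemma twistedDeriv_add (M N : Matrix m n R[X]) :
    twistedDeriv g (M + N) = twistedDeriv g M + twistedDeriv g N := by
  ext i j : 1
  simp only [twistedDeriv_apply, Matrix.add_apply, derivative_add]
  ring

lemma twistedDeriv_sub (M N : Matrix m n R[X]) :
    twistedDeriv g (M - N) = twistedDeriv g M - twistedDeriv g N := by
  ext i j : 1
  simp only [twistedDeriv_apply, Matrix.sub_apply, derivative_sub]
  ring

variable {k : Type*} [Fintype m] [Fintype n]

lemma twistedDeriv_mul_mul (A : Matrix l m R[X]) (B : Matrix m n R[X]) (C : Matrix n k R[X]) :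
    twistedDeriv g (A * B * C)
      = matDeriv A * B * C + A * twistedDeriv g B * C + A * B * matDeriv C := by
  simp only [twistedDeriv, matDeriv_mul, Matrix.add_mul, Matrix.mul_add, Matrix.smul_mul,
    Matrix.mul_smul]
  abel

end MatrixDerivative

section SecondOrderOperator

variable {R : Type*} [CommRing R] {l m n : Type*} [Fintype n]

noncomputable def secondOrderOp (F₂ F₁ F₀ : Matrix n n R[X]) (P : Matrix m n R[X]) :
    Matrix m n R[X] :=
  matDeriv (matDeriv P) * F₂ + matDeriv P * F₁ + P * F₀

noncomputable def concomitant (g : R[X]) (A B : Matrix n n R[X]) (P : Matrix l n R[X])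
    (Q : Matrix m n R[X]) : Matrix l m R[X] :=
  matDeriv P * A * Qᵀ - P * A * (matDeriv Q)ᵀ - P * twistedDeriv g A * Qᵀ + P * B * Qᵀ

lemma twistedDeriv_concomitant [Fintype l] [Fintype m] (g : R[X]) (A B : Matrix n n R[X])
    (P : Matrix l n R[X]) (Q : Matrix m n R[X]) :
    twistedDeriv g (concomitant g A B P Q)
      = matDeriv (matDeriv P) * A * Qᵀ + matDeriv P * B * Qᵀ
        - P * A * (matDeriv (matDeriv Q))ᵀ
        - P * ((2 : R[X]) • twistedDeriv g A - B) * (matDeriv Q)ᵀ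
        - P * (twistedDeriv g (twistedDeriv g A) - twistedDeriv g B) * Qᵀ := by
  simp only [concomitant, twistedDeriv_add, twistedDeriv_sub, twistedDeriv_mul_mul,
    matDeriv_transpose, two_smul, Matrix.mul_sub, Matrix.sub_mul, Matrix.mul_add, Matrix.add_mul]
  abel

structure SymmetryEquations (g : R[X]) (ω F₂ F₁ F₀ : Matrix n n R[X]) : Prop where
  second : F₂ * ω = ω * F₂ᵀ
  first : (2 : R[X]) • twistedDeriv g (F₂ * ω) - F₁ * ω = ω * F₁ᵀ
  zeroth :
    twistedDeriv g (twistedDeriv g (F₂ * ω)) - twistedDeriv g (F₁ * ω) + F₀ * ω = ω * F₀ᵀ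

variable {g : R[X]} {ω F₂ F₁ F₀ : Matrix n n R[X]}

lemma SymmetryEquations.of_mul_eq_zero (h₂ : F₂ * ω = 0) (h₂' : ω * F₂ᵀ = 0) (h₁ : F₁ * ω = 0)
    (h₁' : ω * F₁ᵀ = 0) (h₀ : F₀ * ω = ω * F₀ᵀ) : SymmetryEquations g ω F₂ F₁ F₀ where
  second := h₂.trans h₂'.symm
  first := by simp [h₂, h₁, h₁', twistedDeriv_zero]
  zeroth := by simp [h₂, h₁, h₀, twistedDeriv_zero]

theorem SymmetryEquations.lagrange_identity [Fintype l] [Fintype m]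
    (h : SymmetryEquations g ω F₂ F₁ F₀) (P : Matrix l n R[X]) (Q : Matrix m n R[X]) :
    secondOrderOp F₂ F₁ F₀ P * ω * Qᵀ - P * ω * (secondOrderOp F₂ F₁ F₀ Q)ᵀ
      = twistedDeriv g (concomitant g (F₂ * ω) (F₁ * ω) P Q) := by
  have e₂ : ∀ M : Matrix n m R[X], ω * (F₂ᵀ * M) = F₂ * ω * M := fun M => by
    rw [← Matrix.mul_assoc, h.second]
  have e₁ : ∀ M : Matrix n m R[X],
      ω * (F₁ᵀ * M) = ((2 : R[X]) • twistedDeriv g (F₂ * ω) - F₁ * ω) * M := fun M => by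
    rw [← Matrix.mul_assoc, h.first]
  have e₀ : ∀ M : Matrix n m R[X], ω * (F₀ᵀ * M) =
      (twistedDeriv g (twistedDeriv g (F₂ * ω)) - twistedDeriv g (F₁ * ω) + F₀ * ω) * M :=
    fun M => by rw [← Matrix.mul_assoc, h.zeroth]
  rw [twistedDeriv_concomitant]
  simp only [secondOrderOp, transpose_add, transpose_mul, Matrix.mul_add, Matrix.mul_assoc,
    e₂, e₁, e₀]
  simp only [Matrix.mul_add, Matrix.add_mul, Matrix.mul_sub, Matrix.sub_mul, Matrix.mul_assoc]
  abel

end SecondOrderOperator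

section WeightedIntegral

variable {l m n : Type*} [Fintype l] [Fintype m] [Fintype n]
  {φ : ℝ → ℝ} {g : ℝ[X]} {ω F₂ F₁ F₀ : Matrix n n ℝ[X]}

theorem integral_mul_eval_twisted_eq_zero (hφ : ∀ x, HasDerivAt φ (g.eval x * φ x) x)
    (hmom : ∀ p : ℝ[X], Integrable fun x => φ x * p.eval x) (u : ℝ[X]) :
    ∫ x, φ x * (derivative u + g * u).eval x = 0 := by
  refine integral_eq_zero_of_hasDerivAt_of_integrable (fun x => ?_) (hmom _) (hmom u)
  refine ((hφ x).mul (u.hasDerivAt x)).congr_deriv ?_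
  simp only [eval_add, eval_mul]
  ring

theorem SymmetryEquations.integral_mul_eval_eq
    (hφ : ∀ x, HasDerivAt φ (g.eval x * φ x) x)
    (hmom : ∀ p : ℝ[X], Integrable fun x => φ x * p.eval x)
    (h : SymmetryEquations g ω F₂ F₁ F₀) (P : Matrix l n ℝ[X]) (Q : Matrix m n ℝ[X]) (i : l)
    (j : m) :
    ∫ x, φ x * ((secondOrderOp F₂ F₁ F₀ P * ω * Qᵀ) i j).eval x
      = ∫ x, φ x * ((P * ω * (secondOrderOp F₂ F₁ F₀ Q)ᵀ) i j).eval x := by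
  rw [← sub_eq_zero, ← integral_sub (hmom _) (hmom _)]
  have hdiff := congrFun₂ (h.lagrange_identity P Q) i j
  rw [Matrix.sub_apply, twistedDeriv_apply] at hdiff
  simp_rw [← mul_sub, ← eval_sub, hdiff]
  exact integral_mul_eval_twisted_eq_zero hφ hmom _

end WeightedIntegral

section Gaussian

open Real

lemma hasDerivAt_exp_two_mul_sub_sq (b x : ℝ) :
    HasDerivAt (fun x => exp (2 * b * x - x ^ 2))
      ((C (2 * b) - 2 * X : ℝ[X]).eval x * exp (2 * b * x - x ^ 2)) x := by
  have h : HasDerivAt (fun x => 2 * b * x - x ^ 2) (2 * b - 2 * x) x := by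
    simpa using ((hasDerivAt_id x).const_mul (2 * b)).fun_sub (hasDerivAt_pow 2 x)
  simpa [mul_comm] using h.exp

lemma hasDerivAt_exp_neg_sq (x : ℝ) :
    HasDerivAt (fun x => exp (-x ^ 2)) ((-2 * X : ℝ[X]).eval x * exp (-x ^ 2)) x := by
  simpa using hasDerivAt_exp_two_mul_sub_sq 0 x

lemma integrable_exp_neg_sq_mul_eval (p : ℝ[X]) :
    Integrable fun x => exp (-x ^ 2) * p.eval x := by
  induction p using Polynomial.induction_on' with
  | add p q hp hq => simpa [mul_add] using hp.fun_add hq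
  | monomial k r =>
    have h := integrable_rpow_mul_exp_neg_mul_sq (b := 1) one_pos
      (s := (k : ℝ)) (neg_one_lt_zero.trans_le k.cast_nonneg)
    refine (h.const_mul r).congr (Filter.Eventually.of_forall fun x => ?_)
    simp only [rpow_natCast, neg_mul, one_mul, eval_monomial]
    ring

lemma integrable_exp_two_mul_sub_sq_mul_eval (b : ℝ) (p : ℝ[X]) :
    Integrable fun x => exp (2 * b * x - x ^ 2) * p.eval x := by
  refine (((integrable_exp_neg_sq_mul_eval (p.comp (X + C b))).comp_sub_right b).const_mul
      (exp (b ^ 2))).congr (Filter.Eventually.of_forall fun x => ?_)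
  simp only [eval_comp, eval_add, eval_X, eval_C, sub_add_cancel]
  rw [← mul_assoc, ← exp_add]
  ring_nf

end Gaussian

section HermiteWeight

open Real

noncomputable def weightPoly (a c : ℝ) : Matrix (Fin 3) (Fin 3) ℝ[X] :=
  !![C (a ^ 2) * X ^ 2, C a * X, C (a * c) * X ^ 2;
     C a * X, 1, C c * X;
     C (a * c) * X ^ 2, C c * X, C (c ^ 2) * X ^ 2 + 1]

lemma rightD2_eq_secondOrderOp (a c : ℝ) (P : Matrix (Fin 3) (Fin 3) ℝ[X]) :
    rightD2 a c P = secondOrderOp (G2p a c) (G1p a c) (G0p a c) P := by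
  rw [rightD2, secondOrderOp, matDeriv, matDeriv, Matrix.map_map]
  rfl

lemma W_eq_add (a b c x : ℝ) :
    W a b c x = exp (-x ^ 2) • evalM (weightPoly a c) x
      + exp (2 * b * x - x ^ 2) • evalM (single 0 0 1) x := by
  have hexp : exp (2 * b * x - x ^ 2) = exp (-x ^ 2) * exp (2 * b * x) := by
    rw [← exp_add]; ring_nf
  ext i j
  fin_cases i <;> fin_cases j <;> simp [W, weightPoly, evalM, hexp, mul_add, add_comm]

lemma evalM_mul_W_mul_transpose_apply (a b c x : ℝ) (M N : Matrix (Fin 3) (Fin 3) ℝ[X])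
    (i j : Fin 3) :
    (evalM M x * W a b c x * (evalM N x)ᵀ) i j
      = exp (-x ^ 2) * ((M * weightPoly a c * Nᵀ) i j).eval x
        + exp (2 * b * x - x ^ 2)
          * ((M * (single 0 0 1 : Matrix (Fin 3) (Fin 3) ℝ[X]) * Nᵀ) i j).eval x := by
  have heval : ∀ K, ((M * K * Nᵀ) i j).eval x = (evalM M x * evalM K x * (evalM N x)ᵀ) i j :=
    fun K => by
      simp only [evalM, ← coe_evalRingHom, ← transpose_map, ← Matrix.map_mul, map_apply]
  rw [heval, heval, W_eq_add]
  simp [Matrix.mul_add, Matrix.add_mul]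

lemma symmetryEquations_weightPoly {a c : ℝ} (hc : c ≠ 0) :
    SymmetryEquations (-2 * X) (weightPoly a c) (G2p a c) (G1p a c) (G0p a c) := by
  constructor <;> ext i j : 1 <;> fin_cases i <;> fin_cases j <;>
    refine Polynomial.funext fun x => ?_ <;>
    simp [G2p, G1p, G0p, weightPoly, derivative_pow, mul_apply, Fin.sum_univ_three] <;>
    field_simp <;> ring

lemma symmetryEquations_single (a c : ℝ) (g : ℝ[X]) :
    SymmetryEquations g (single 0 0 1) (G2p a c) (G1p a c) (G0p a c) := by
  apply SymmetryEquations.of_mul_eq_zero <;> ext i j : 1 <;> fin_cases i <;> fin_cases j <;>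
    simp [G2p, G1p, G0p, mul_apply, Fin.sum_univ_three]

end HermiteWeight

/-- the operator D₂ is W-symmetric: for all matrix polynomials P, Q the
functions (P·D₂)(x)·W(x)·Q(x)ᵀ and P(x)·W(x)·((Q·D₂)(x))ᵀ are entrywise integrable
on ℝ and ⟨P·D₂, Q⟩_W = ⟨P, Q·D₂⟩_W. -/
theorem D2_W_symmetric (a b c : ℝ) (hc : c ≠ 0)
    (P Q : Matrix (Fin 3) (Fin 3) (Polynomial ℝ)) :
    (∀ i j, Integrable
        (fun x => (evalM (rightD2 a c P) x * W a b c x * (evalM Q x)ᵀ) i j)) ∧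
    (∀ i j, Integrable
        (fun x => (evalM P x * W a b c x * (evalM (rightD2 a c Q) x)ᵀ) i j)) ∧
    (∀ i j, (∫ x, (evalM (rightD2 a c P) x * W a b c x * (evalM Q x)ᵀ) i j)
        = ∫ x, (evalM P x * W a b c x * (evalM (rightD2 a c Q) x)ᵀ) i j) := by
  have hintegrable : ∀ M N i j,
      Integrable fun x => (evalM M x * W a b c x * (evalM N x)ᵀ) i j := fun M N i j => by
    simp_rw [evalM_mul_W_mul_transpose_apply]
    exact (integrable_exp_neg_sq_mul_eval _).add (integrable_exp_two_mul_sub_sq_mul_eval b _)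
  refine ⟨fun i j => hintegrable _ _ i j, fun i j => hintegrable _ _ i j, fun i j => ?_⟩
  simp_rw [evalM_mul_W_mul_transpose_apply, rightD2_eq_secondOrderOp]
  rw [integral_add (integrable_exp_neg_sq_mul_eval _) (integrable_exp_two_mul_sub_sq_mul_eval b _),
    integral_add (integrable_exp_neg_sq_mul_eval _) (integrable_exp_two_mul_sub_sq_mul_eval b _),
    (symmetryEquations_weightPoly hc).integral_mul_eval_eq hasDerivAt_exp_neg_sq
      integrable_exp_neg_sq_mul_eval,
    (symmetryEquations_single a c _).integral_mul_eval_eq (hasDerivAt_exp_two_mul_sub_sq b)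
      (integrable_exp_two_mul_sub_sq_mul_eval b)]
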